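/- The HALS update is the exact solution of the single-column subproblem: let G = AᵀA with G(i,i) > 0, and fix a row index i of X. Then the row vector x* = [X(i,:) + ((AᵀB)(i,:) − G(i,:)X)/G(i,i)]₊ (projection of the unconstrained row update onto the nonnegative orthant) minimizes ‖AX' − B‖²_F over all nonnegative matrices X' that agree with X in every row except row i. -/

import Mathlib

open scoped Matrix

/-!
Replacing row `i` of `X` by `x` adds `(x j - X i j) • A(:, i)` to column `j` of the residual
`AX - B`. Completing the square, the objective becomes `∑ j, (G i i * (x j - p j) ^ 2 + c j)`
with `p j` the unconstrained row update, so it splits into one-variable quadratics, and on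
`[0, ∞)` each of them is minimised at the projection `max 0 (p j)`.
-/

theorem sq_max_zero_sub_le {α : Type*} [CommRing α] [LinearOrder α] [IsStrictOrderedRing α]
    {p t : α} (ht : 0 ≤ t) : (max 0 p - p) ^ 2 ≤ (t - p) ^ 2 := by
  rcases le_total 0 p with hp | hp
  · rw [max_eq_right hp, sub_self, sq, zero_mul]
    exact sq_nonneg _
  · rw [max_eq_left hp]
    nlinarith

theorem Finset.sum_add_mul_sq_eq {ι K : Type*} [Fintype ι] [Field K] (r a : ι → K) (δ : K)
    (ha : ∑ l, a l ^ 2 ≠ 0) :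
    ∑ l, (r l + a l * δ) ^ 2 =
      ∑ l, r l ^ 2 - (∑ l, a l * r l) ^ 2 / ∑ l, a l ^ 2 +
        (∑ l, a l ^ 2) * (δ + (∑ l, a l * r l) / ∑ l, a l ^ 2) ^ 2 := by
  have expand : ∑ l, (r l + a l * δ) ^ 2 =
      ∑ l, r l ^ 2 + 2 * δ * ∑ l, a l * r l + δ ^ 2 * ∑ l, a l ^ 2 := by
    simp only [Finset.mul_sum, ← Finset.sum_add_distrib]
    exact Finset.sum_congr rfl fun l _ => by ring
  rw [expand]
  field_simp
  ring

namespace Matrix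

variable {l m n R : Type*} [DecidableEq m]

theorem eq_updateRow_of_forall_ne {M N : Matrix m n R} {i : m} (h : ∀ i' ≠ i, N i' = M i') :
    N = M.updateRow i (N i) :=
  (Function.update_eq_iff.mpr ⟨rfl, fun i' hi' => (h i' hi').symm⟩).symm

variable [Fintype m]

theorem mul_updateRow_apply [Ring R] (A : Matrix l m R) (X : Matrix m n R) (i : m) (x : n → R)
    (a : l) (j : n) :
    (A * X.updateRow i x) a j = (A * X) a j + A a i * (x j - X i j) := by
  have hrow : ∀ k, X.updateRow i x k j = X k j + if k = i then x j - X i j else 0 := by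
    intro k
    rcases eq_or_ne k i with rfl | hk
    · simp
    · simp [hk]
  simp only [mul_apply, hrow, mul_add, Finset.sum_add_distrib, mul_ite, mul_zero,
    Finset.sum_ite_eq', Finset.mem_univ, if_true]

omit [DecidableEq m] [Fintype m] in
theorem transpose_mul_self_apply_self [Fintype l] [CommRing R] (A : Matrix l m R) (i : m) :
    (Aᵀ * A) i i = ∑ a, A a i ^ 2 := by
  simp [mul_apply, sq]

theorem sum_sq_mul_updateRow_sub_apply [Fintype l] [Field R] (A : Matrix l m R)
    (X : Matrix m n R) (B : Matrix l n R) (i : m) (hA : (Aᵀ * A) i i ≠ 0) (x : n → R) (j : n) :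
    ∑ a, (A * X.updateRow i x - B) a j ^ 2 =
      ∑ a, (A * X - B) a j ^ 2 - (Aᵀ * (A * X - B)) i j ^ 2 / (Aᵀ * A) i i +
        (Aᵀ * A) i i * (x j - (X i j - (Aᵀ * (A * X - B)) i j / (Aᵀ * A) i i)) ^ 2 := by
  have hcol : ∀ a, (A * X.updateRow i x - B) a j = (A * X - B) a j + A a i * (x j - X i j) := by
    intro a
    rw [sub_apply, sub_apply, mul_updateRow_apply]
    ring
  have hcorr : (Aᵀ * (A * X - B)) i j = ∑ a, A a i * (A * X - B) a j := by
    simp [mul_apply]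
  rw [transpose_mul_self_apply_self] at hA ⊢
  rw [Finset.sum_congr rfl fun a _ => congrArg (· ^ 2) (hcol a), hcorr,
    Finset.sum_add_mul_sq_eq _ _ _ hA]
  ring

end Matrix

theorem hals_row_update_optimal_general
    (m n k : ℕ)
    (A : Matrix (Fin m) (Fin n) ℝ) (B : Matrix (Fin m) (Fin k) ℝ)
    (X : Matrix (Fin n) (Fin k) ℝ)
    (i : Fin n) (hG : 0 < (Aᵀ * A) i i)
    (xstar : Fin k → ℝ)
    (hxstar : ∀ j, xstar j =
      max 0 (X i j + ((Aᵀ * B) i j - (Aᵀ * A * X) i j) / (Aᵀ * A) i i)) :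
    ∀ X' : Matrix (Fin n) (Fin k) ℝ,
      (∀ i' j, 0 ≤ X' i' j) → (∀ i' j, i' ≠ i → X' i' j = X i' j) →
      ∑ a, ∑ j, ((A * X.updateRow i xstar - B) a j) ^ 2 ≤
        ∑ a, ∑ j, ((A * X' - B) a j) ^ 2 := by
  intro X' hX' hagree
  rw [Matrix.eq_updateRow_of_forall_ne fun i' hi' => funext fun j => hagree i' j hi']
  conv_lhs => rw [Finset.sum_comm]
  conv_rhs => rw [Finset.sum_comm]
  refine Finset.sum_le_sum fun j _ => ?_
  have hxstar' : xstar j = max 0 (X i j - (Aᵀ * (A * X - B)) i j / (Aᵀ * A) i i) := by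
    rw [hxstar, Matrix.mul_sub, Matrix.mul_assoc, Matrix.sub_apply]
    ring_nf
  rw [Matrix.sum_sq_mul_updateRow_sub_apply _ _ _ _ hG.ne',
    Matrix.sum_sq_mul_updateRow_sub_apply _ _ _ _ hG.ne', hxstar']
  exact add_le_add_right (mul_le_mul_of_nonneg_left (sq_max_zero_sub_le (hX' i j)) hG.le) _

/-- The HALS row update exactly solves the single-row subproblem:
with `G = AᵀA`, `G i i > 0`, the row
`x* = [X(i,:) + ((AᵀB)(i,:) − G(i,:)X)/G(i,i)]₊` minimizes `‖AX' − B‖²_F`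
over nonnegative `X'` agreeing with `X` in every row except row `i`. -/
theorem hals_row_update_optimal
    (m n k : ℕ)
    (A : Matrix (Fin m) (Fin n) ℝ) (B : Matrix (Fin m) (Fin k) ℝ)
    (X : Matrix (Fin n) (Fin k) ℝ) (hX : ∀ i j, 0 ≤ X i j)
    (i : Fin n) (hG : 0 < (Aᵀ * A) i i)
    (xstar : Fin k → ℝ)
    (hxstar : ∀ j, xstar j =
      max 0 (X i j + ((Aᵀ * B) i j - (Aᵀ * A * X) i j) / (Aᵀ * A) i i)) :
    ∀ X' : Matrix (Fin n) (Fin k) ℝ,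
      (∀ i' j, 0 ≤ X' i' j) → (∀ i' j, i' ≠ i → X' i' j = X i' j) →
      ∑ a, ∑ j, ((A * X.updateRow i xstar - B) a j) ^ 2 ≤
        ∑ a, ∑ j, ((A * X' - B) a j) ^ 2 :=
  hals_row_update_optimal_general m n k A B X i hG xstar hxstar
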